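/- Define σ₀(c) := sup{ s ∈ [0,1] : g(c, s) ≥ 0 } for c > 0. Then σ₀ is strictly decreasing: if 0 < c₁ < c₂, then σ₀(c₂) < σ₀(c₁). -/

import Mathlib

open MeasureTheory ProbabilityTheory

/-- The logistic sigmoid `S(t) = 1/(1 + exp(-t))`. -/
noncomputable def S (t : ℝ) : ℝ := 1 / (1 + Real.exp (-t))

/-- The standard Gaussian measure on `ℝ`. -/
noncomputable def γ : Measure ℝ := gaussianReal 0 1

/-- The validation mean `μᵥ(s) := √(2(1 - s²))`. -/
noncomputable def μv (s : ℝ) : ℝ := Real.sqrt (2 * (1 - s ^ 2))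

/-- `g(c, s) := -E_Z[(S(c(μᵥ(s) + s Z)) - 1)(μᵥ(s) + s Z)]` for a standard Gaussian `Z`. -/
noncomputable def g (c s : ℝ) : ℝ :=
  -∫ z, (S (c * (μv s + s * z)) - 1) * (μv s + s * z) ∂γ

/-- `σ₀(c) := sup { s ∈ [0,1] : g(c, s) ≥ 0 }`. -/
noncomputable def σ₀ (c : ℝ) : ℝ := sSup {s : ℝ | s ∈ Set.Icc (0 : ℝ) 1 ∧ 0 ≤ g c s}

/-! For fixed `s`, the map `c ↦ g(c, s)` is strictly decreasing: for every real `u`,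
`c ↦ (S(c u) - 1) u` is nondecreasing, and strictly increasing when `u ≠ 0`. Since `g(c, 0) ≥ 0`
and `g(c, 1) < g(0, 1) = 0` (the Gaussian is centred), the supremum `s₂ = σ₀(c₂)` is attained at a
point `s₂ < 1` by continuity of `g(c₂, ·)`. There `g(c₁, s₂) > g(c₂, s₂) ≥ 0`, so `g(c₁, ·)` stays
nonnegative slightly to the right of `s₂`, whence `σ₀(c₁) > s₂`. -/

open Set Filter Topology Real

section SupOfNonnegSet

variable {f : ℝ → ℝ} {a b : ℝ}

lemma csSup_nonneg_mem_of_continuousOn (hab : a ≤ b) (hf : ContinuousOn f (Icc a b))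
    (ha : 0 ≤ f a) :
    sSup {s | s ∈ Icc a b ∧ 0 ≤ f s} ∈ {s | s ∈ Icc a b ∧ 0 ≤ f s} :=
  (hf.preimage_isClosed_of_isClosed isClosed_Icc isClosed_Ici).csSup_mem
    ⟨a, left_mem_Icc.2 hab, ha⟩ ⟨b, fun _ hs => hs.1.2⟩

lemma lt_csSup_nonneg_of_continuousOn (hf : ContinuousOn f (Icc a b)) {x : ℝ}
    (hx : x ∈ Ico a b) (hfx : 0 < f x) :
    x < sSup {s | s ∈ Icc a b ∧ 0 ≤ f s} := by
  have hpos : ∀ᶠ s in 𝓝[>] x, 0 < f s := by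
    rw [← nhdsWithin_Ioc_eq_nhdsGT hx.2]
    exact nhdsWithin_mono _ (Ioc_subset_Icc_self.trans (Icc_subset_Icc_left hx.1))
      ((hf x (Ico_subset_Icc_self hx)).eventually (lt_mem_nhds hfx))
  have hmem : ∀ᶠ s in 𝓝[>] x, s ∈ Ioc x b := Ioc_mem_nhdsGT hx.2
  obtain ⟨s, hfs, hs⟩ := (hpos.and hmem).exists
  exact hs.1.trans_le
    (le_csSup ⟨b, fun _ ht => ht.1.2⟩ ⟨⟨hx.1.trans hs.1.le, hs.2⟩, hfs.le⟩)

end SupOfNonnegSet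

lemma S_eq_sigmoid : S = sigmoid := funext fun _ => one_div _

lemma sigmoid_sub_mul_pos {c₁ c₂ : ℝ} (hc : c₁ < c₂) {u : ℝ} (hu : u ≠ 0) :
    0 < (sigmoid (c₂ * u) - sigmoid (c₁ * u)) * u := by
  rcases hu.lt_or_gt with hu | hu
  · exact mul_pos_of_neg_of_neg
      (sub_neg.2 (sigmoid_strictMono (mul_lt_mul_of_neg_right hc hu))) hu
  · exact mul_pos (sub_pos.2 (sigmoid_strictMono (mul_lt_mul_of_pos_right hc hu))) hu

lemma sigmoid_sub_mul_nonneg {c₁ c₂ : ℝ} (hc : c₁ < c₂) (u : ℝ) :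
    0 ≤ (sigmoid (c₂ * u) - sigmoid (c₁ * u)) * u := by
  rcases eq_or_ne u 0 with rfl | hu
  · simp
  · exact (sigmoid_sub_mul_pos hc hu).le

lemma abs_sigmoid_sub_one_le (t : ℝ) : |sigmoid t - 1| ≤ 1 := by
  rw [abs_sub_comm, abs_of_pos (sub_pos.2 (sigmoid_lt_one t))]
  linarith [sigmoid_pos t]

section LogisticIntegral

variable {α : Type*} [MeasurableSpace α] {μ : Measure α} {u : α → ℝ}

lemma integrable_sigmoid_sub_one_mul (hu : Integrable u μ) (c : ℝ) :
    Integrable (fun x => (sigmoid (c * u x) - 1) * u x) μ := by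
  refine hu.bdd_mul (c := 1) ?_ (ae_of_all _ fun x => ?_)
  · exact (continuous_sigmoid.comp_aestronglyMeasurable
      (hu.aestronglyMeasurable.const_mul c)).sub aestronglyMeasurable_const
  · exact abs_sigmoid_sub_one_le _

lemma integral_sigmoid_sub_one_mul_lt [TopologicalSpace α] [OpensMeasurableSpace α]
    [μ.IsOpenPosMeasure] (hu : Continuous u) (hui : Integrable u μ) {x₀ : α} (hx₀ : u x₀ ≠ 0)
    {c₁ c₂ : ℝ} (hc : c₁ < c₂) :
    ∫ x, (sigmoid (c₁ * u x) - 1) * u x ∂μ < ∫ x, (sigmoid (c₂ * u x) - 1) * u x ∂μ := by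
  have hdiff : ∀ x, (sigmoid (c₂ * u x) - 1) * u x - (sigmoid (c₁ * u x) - 1) * u x
      = (sigmoid (c₂ * u x) - sigmoid (c₁ * u x)) * u x := fun x => by ring
  rw [← sub_pos, ← integral_sub (integrable_sigmoid_sub_one_mul hui c₂)
    (integrable_sigmoid_sub_one_mul hui c₁)]
  simp_rw [hdiff]
  refine integral_pos_of_integrable_nonneg_nonzero (x := x₀) (by fun_prop) ?_
    (fun x => sigmoid_sub_mul_nonneg hc (u x)) (sigmoid_sub_mul_pos hc hx₀).ne'
  exact ((integrable_sigmoid_sub_one_mul hui c₂).sub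
    (integrable_sigmoid_sub_one_mul hui c₁)).congr (ae_of_all _ hdiff)

end LogisticIntegral

instance : IsProbabilityMeasure γ := instIsProbabilityMeasureGaussianReal 0 1

instance : γ.IsOpenPosMeasure :=
  (gaussianReal_absolutelyContinuous' 0 one_ne_zero).isOpenPosMeasure

lemma integrable_const_add_mul_gaussianReal (m : ℝ) (v : NNReal) (a s : ℝ) :
    Integrable (fun z => a + s * z) (gaussianReal m v) :=
  (integrable_const a).add (((memLp_id_gaussianReal 1).integrable le_rfl).const_mul s)

lemma abs_μv_le_sqrt_two (s : ℝ) : |μv s| ≤ √2 := by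
  rw [μv, abs_of_nonneg (Real.sqrt_nonneg _)]
  exact Real.sqrt_le_sqrt (by nlinarith [sq_nonneg s])

lemma abs_μv_add_mul_le {s : ℝ} (hs : s ∈ Icc (0 : ℝ) 1) (z : ℝ) :
    |μv s + s * z| ≤ √2 + |z| := calc
  _ ≤ |μv s| + |s| * |z| := by rw [← abs_mul]; exact abs_add_le _ _
  _ ≤ √2 + 1 * |z| := by
    gcongr
    · exact abs_μv_le_sqrt_two s
    · exact abs_le.2 ⟨by linarith [hs.1], hs.2⟩
  _ = √2 + |z| := by rw [one_mul]

lemma g_eq (c s : ℝ) :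
    g c s = -∫ z, (sigmoid (c * (μv s + s * z)) - 1) * (μv s + s * z) ∂γ := by
  rw [g, S_eq_sigmoid]

lemma exists_μv_add_mul_ne_zero (s : ℝ) : ∃ z, μv s + s * z ≠ 0 := by
  by_contra! h
  have hμv : μv s = 0 := by simpa using h 0
  have hs : s = 0 := by simpa [hμv] using h 1
  simp [hs, μv] at hμv

lemma g_strictAnti_left (s : ℝ) : StrictAnti fun c => g c s := by
  intro c₁ c₂ hc
  obtain ⟨z₀, hz₀⟩ := exists_μv_add_mul_ne_zero s
  simp only [g_eq, neg_lt_neg_iff]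
  exact integral_sigmoid_sub_one_mul_lt (μ := γ) (by fun_prop)
    (integrable_const_add_mul_gaussianReal 0 1 _ _) hz₀ hc

lemma g_zero_one : g 0 1 = 0 := by
  have hμv : μv 1 = 0 := by simp [μv]
  simp only [g_eq, hμv, zero_mul, sigmoid_zero, zero_add, one_mul, γ]
  rw [integral_const_mul, integral_id_gaussianReal, mul_zero, neg_zero]

lemma g_nonneg_at_zero (c : ℝ) : 0 ≤ g c 0 := by
  simp only [g_eq, zero_mul, add_zero, integral_const, probReal_univ, one_smul]
  exact neg_nonneg.2 (mul_nonpos_of_nonpos_of_nonneg (sub_nonpos.2 (sigmoid_le_one _))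
    (Real.sqrt_nonneg _))

lemma g_neg_at_one {c : ℝ} (hc : 0 < c) : g c 1 < 0 :=
  g_zero_one ▸ g_strictAnti_left 1 hc

lemma continuousOn_g (c : ℝ) : ContinuousOn (g c) (Icc 0 1) := by
  rw [show g c = _ from funext (g_eq c)]
  refine (continuousOn_of_dominated (bound := fun z => √2 + |z|) (fun s _ => ?_)
    (fun s hs => ae_of_all _ fun z => ?_) ((integrable_const _).add ?_)
    (ae_of_all _ fun z => ?_)).neg
  · exact (integrable_sigmoid_sub_one_mul
      (integrable_const_add_mul_gaussianReal 0 1 _ s) c).aestronglyMeasurable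
  · rw [norm_mul, norm_eq_abs, norm_eq_abs]
    exact (mul_le_of_le_one_left (abs_nonneg _) (abs_sigmoid_sub_one_le _)).trans
      (abs_μv_add_mul_le hs z)
  · exact ((memLp_id_gaussianReal 1).integrable le_rfl).abs
  · have : Continuous μv := by unfold μv; fun_prop
    fun_prop

/-- The threshold `σ₀` is strictly decreasing: if `0 < c₁ < c₂` then `σ₀(c₂) < σ₀(c₁)`. -/
theorem stmt15 (c₁ c₂ : ℝ) (hc₁ : 0 < c₁) (hc : c₁ < c₂) : σ₀ c₂ < σ₀ c₁ := by
  obtain ⟨hs₂, hg₂⟩ := csSup_nonneg_mem_of_continuousOn zero_le_one (continuousOn_g c₂)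
    (g_nonneg_at_zero c₂)
  have hs₂_ne_one : σ₀ c₂ ≠ 1 := fun h =>
    (g_neg_at_one (hc₁.trans hc)).not_ge (h ▸ hg₂)
  exact lt_csSup_nonneg_of_continuousOn (continuousOn_g c₁)
    ⟨hs₂.1, hs₂.2.lt_of_ne hs₂_ne_one⟩ (hg₂.trans_lt (g_strictAnti_left _ hc))
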